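/- arXiv:2510.23735 — 2 statements merged into one kernel-verified Lean document; each statement's English description precedes it below -/
import Mathlib

section
/- For r ≤ min(n,m), the ideal I_{n,m,r} is contained in the associated graded ideal gr I(UZ_{n,m,r}) of the vanishing ideal of the locus UZ_{n,m,r} of rook placement matrices of size at least r. -/
open MvPolynomial

/-- A rook placement on the `n × m` board. -/
def IsRookPlacement {n m : ℕ} (R : Finset (Fin n × Fin m)) : Prop :=
  ∀ p ∈ R, ∀ q ∈ R, p ≠ q → p.1 ≠ q.1 ∧ p.2 ≠ q.2

/-- The associated graded ideal `gr I`. -/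
noncomputable def grIdeal {σ : Type*} (I : Ideal (MvPolynomial σ ℂ)) :
    Ideal (MvPolynomial σ ℂ) :=
  Ideal.span {g | ∃ f ∈ I, f ≠ 0 ∧ g = homogeneousComponent f.totalDegree f}

/-- The locus `UZ_{n,m,r} ⊆ Mat_{n×m}(ℂ) ≅ ℂ^{n×m}` of 0/1 matrices with at most
one `1` in each row and column and at least `r` ones. -/
def upperRookLocus (n m r : ℕ) : Set ((Fin n × Fin m) → ℂ) :=
  {z | ∃ R : Finset (Fin n × Fin m), IsRookPlacement R ∧ r ≤ R.card ∧
        ∀ p, z p = if p ∈ R then 1 else 0}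

/-- The ideal `I_{n,m,r}`: generated by products of two variables in a common
row, products of two variables in a common column, products of `n−r+1` distinct
row sums, and products of `m−r+1` distinct column sums. -/
noncomputable def idealInmr (n m r : ℕ) : Ideal (MvPolynomial (Fin n × Fin m) ℂ) :=
  Ideal.span
    ({f | ∃ (i : Fin n) (j j' : Fin m), f = X (i, j) * X (i, j')} ∪
     {f | ∃ (i i' : Fin n) (j : Fin m), f = X (i, j) * X (i', j)} ∪
     {f | ∃ is : Fin (n - r + 1) → Fin n, Function.Injective is ∧
            f = ∏ k, (∑ j, X (is k, j))} ∪
     {f | ∃ js : Fin (m - r + 1) → Fin m, Function.Injective js ∧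
            f = ∏ k, (∑ i, X (i, js k))})

/-!
Each generator of `I_{n,m,r}` is the top-degree component of a polynomial vanishing on
`UZ_{n,m,r}`. At a rook placement every variable is `0` or `1` and two rooks never share a line,
so `x_p x_q - δ_{pq} x_p` vanishes. A rook placement with at least `r` rooks occupies at least
`r` rows, hence meets any `n - r + 1` distinct rows; there the row sum is `1`, so
`∏ₖ (rowSumₖ - 1)` vanishes, and its top-degree component is `∏ₖ rowSumₖ`. Columns are
handled by transposing.
-/

lemma mem_grIdeal_of_isHomogeneous_of_add_mem {σ : Type*} {I : Ideal (MvPolynomial σ ℂ)}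
    {g h : MvPolynomial σ ℂ} {d : ℕ} (hg : g.IsHomogeneous d) (hh : h.totalDegree < d)
    (hI : g + h ∈ I) : g ∈ grIdeal I := by
  obtain rfl | hg0 := eq_or_ne g 0
  · exact zero_mem _
  have hdeg : (g + h).totalDegree = d := by
    rw [totalDegree_add_eq_left_of_totalDegree_lt (hg.totalDegree hg0 ▸ hh), hg.totalDegree hg0]
  have hcomp : homogeneousComponent d (g + h) = g := by
    rw [map_add, homogeneousComponent_of_mem ((mem_homogeneousSubmodule _ _).mpr hg),
      if_pos rfl, homogeneousComponent_eq_zero _ _ hh, add_zero]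
  have hne : g + h ≠ 0 := fun h0 => by rw [h0, totalDegree_zero] at hdeg; omega
  exact Ideal.subset_span ⟨g + h, hI, hne, by rw [hdeg, hcomp]⟩

lemma totalDegree_prod_sub_one_sub_prod_lt {σ ι R : Type*} [CommRing R]
    {L : ι → MvPolynomial σ R} (hL : ∀ k, (L k).totalDegree ≤ 1) {s : Finset ι}
    (hs : s.Nonempty) : (∏ k ∈ s, (L k - 1) - ∏ k ∈ s, L k).totalDegree < s.card := by
  induction hs using Finset.Nonempty.cons_induction with
  | singleton a => simp
  | cons a s ha hs ih =>
    have hprod : (∏ k ∈ s, (L k - 1)).totalDegree ≤ s.card :=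
      calc (∏ k ∈ s, (L k - 1)).totalDegree ≤ ∑ k ∈ s, (L k - 1).totalDegree :=
            totalDegree_finsetProd _ _
        _ ≤ ∑ _k ∈ s, 1 := Finset.sum_le_sum fun k _ =>
            (totalDegree_sub _ _).trans (max_le (hL k) (by simp))
        _ = s.card := by simp
    rw [Finset.prod_cons, Finset.prod_cons, Finset.card_cons,
      show (L a - 1) * ∏ k ∈ s, (L k - 1) - L a * ∏ k ∈ s, L k
        = L a * (∏ k ∈ s, (L k - 1) - ∏ k ∈ s, L k) - ∏ k ∈ s, (L k - 1) by ring]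
    refine (totalDegree_sub _ _).trans_lt (max_lt ?_ (by omega))
    exact (totalDegree_mul _ _).trans_lt (by linarith [hL a])

lemma prod_mem_grIdeal_vanishingIdeal {σ ι : Type*} [Fintype ι] [Nonempty ι]
    {S : Set (σ → ℂ)} {L : ι → MvPolynomial σ ℂ} (hL : ∀ k, (L k).IsHomogeneous 1)
    (hS : ∀ z ∈ S, ∃ k, eval z (L k) = 1) :
    ∏ k, L k ∈ grIdeal (vanishingIdeal ℂ S) := by
  have hhom : (∏ k, L k).IsHomogeneous (Fintype.card ι) := by
    simpa using IsHomogeneous.prod Finset.univ L (fun _ => 1) fun k _ => hL k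
  refine mem_grIdeal_of_isHomogeneous_of_add_mem hhom
    (totalDegree_prod_sub_one_sub_prod_lt (fun k => (hL k).totalDegree_le)
      Finset.univ_nonempty) ?_
  intro z hz
  obtain ⟨k, hk⟩ := hS z hz
  rw [add_sub_cancel, map_prod]
  exact Finset.prod_eq_zero (Finset.mem_univ k) (by simp [hk])

section RookLocus

variable {n m r : ℕ}

lemma IsRookPlacement.mem_iff_of_fst_eq {R : Finset (Fin n × Fin m)} (hR : IsRookPlacement R)
    {p q : Fin n × Fin m} (hp : p ∈ R) (hpq : p.1 = q.1) : q ∈ R ↔ q = p :=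
  ⟨fun hq => by_contra fun hne => (hR q hq p hp hne).1 hpq.symm, fun h => h ▸ hp⟩

lemma IsRookPlacement.card_image_fst {R : Finset (Fin n × Fin m)} (hR : IsRookPlacement R) :
    (R.image Prod.fst).card = R.card :=
  Finset.card_image_of_injOn fun p hp q hq hpq => by_contra fun hne => (hR p hp q hq hne).1 hpq

lemma IsRookPlacement.swap {R : Finset (Fin n × Fin m)} (hR : IsRookPlacement R) :
    IsRookPlacement (R.map (Equiv.prodComm _ _).toEmbedding) := by
  simp only [IsRookPlacement, Finset.mem_map_equiv] at hR ⊢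
  intro p hp q hq hpq
  exact (hR _ hp _ hq fun h => hpq (by simpa using congrArg Prod.swap h)).symm

lemma swap_mem_upperRookLocus {z : (Fin n × Fin m) → ℂ} (hz : z ∈ upperRookLocus n m r) :
    z ∘ Prod.swap ∈ upperRookLocus m n r := by
  obtain ⟨R, hR, hcard, hzR⟩ := hz
  refine ⟨R.map (Equiv.prodComm _ _).toEmbedding, hR.swap, by simpa using hcard, fun p => ?_⟩
  simp [hzR, Finset.mem_map_equiv]

lemma apply_mul_apply_eq_ite_of_mem_upperRookLocus {z : (Fin n × Fin m) → ℂ}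
    (hz : z ∈ upperRookLocus n m r) {p q : Fin n × Fin m} (hpq : p.1 = q.1 ∨ p.2 = q.2) :
    z p * z q = if p = q then z p else 0 := by
  obtain ⟨R, hR, -, hzR⟩ := hz
  split_ifs with h
  · subst h; by_cases hp : p ∈ R <;> simp [hzR, hp]
  · by_cases hp : p ∈ R
    · by_cases hq : q ∈ R
      · exact absurd hpq (not_or.mpr (hR p hp q hq h))
      · simp [hzR, hq]
    · simp [hzR, hp]

lemma exists_rowSum_eq_one {ι : Type*} [Fintype ι] {z : (Fin n × Fin m) → ℂ}
    (hz : z ∈ upperRookLocus n m r) {rows : ι → Fin n} (hrows : Function.Injective rows)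
    (hcard : n < Fintype.card ι + r) : ∃ k, ∑ j, z (rows k, j) = 1 := by
  classical
  obtain ⟨R, hR, hr, hzR⟩ := hz
  obtain ⟨i, hi⟩ := Finset.inter_nonempty_of_card_lt_card_add_card
    (Finset.subset_univ (Finset.univ.image rows)) (Finset.subset_univ (R.image Prod.fst))
    (by rw [Finset.card_univ, Fintype.card_fin, Finset.card_image_of_injective _ hrows,
      Finset.card_univ, hR.card_image_fst]; omega)
  obtain ⟨⟨k, -, rfl⟩, ⟨p, hp, hpk⟩⟩ := And.imp Finset.mem_image.mp Finset.mem_image.mp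
    (Finset.mem_inter.mp hi)
  refine ⟨k, ?_⟩
  have hrow : ∀ j, z (rows k, j) = if j = p.2 then 1 else 0 := fun j => by
    simp only [hzR, hR.mem_iff_of_fst_eq (q := (rows k, j)) hp hpk, Prod.ext_iff, hpk, true_and]
  simp [hrow]

lemma exists_colSum_eq_one {ι : Type*} [Fintype ι] {z : (Fin n × Fin m) → ℂ}
    (hz : z ∈ upperRookLocus n m r) {cols : ι → Fin m} (hcols : Function.Injective cols)
    (hcard : m < Fintype.card ι + r) : ∃ k, ∑ i, z (i, cols k) = 1 :=
  exists_rowSum_eq_one (swap_mem_upperRookLocus hz) hcols hcard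

lemma X_mul_X_mem_grIdeal {p q : Fin n × Fin m} (hpq : p.1 = q.1 ∨ p.2 = q.2) :
    X p * X q ∈ grIdeal (vanishingIdeal ℂ (upperRookLocus n m r)) := by
  refine mem_grIdeal_of_isHomogeneous_of_add_mem (d := 2) (h := -if p = q then X p else 0)
    ((isHomogeneous_X ℂ p).mul (isHomogeneous_X ℂ q)) ?_ fun z hz => ?_
  · split_ifs <;> simp
  · have := apply_mul_apply_eq_ite_of_mem_upperRookLocus hz hpq
    split_ifs at this ⊢ <;> simp [this]

end RookLocus

theorem idealInmr_le_grVanishing_general (n m r : ℕ) :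
    idealInmr n m r ≤ grIdeal (MvPolynomial.vanishingIdeal ℂ (upperRookLocus n m r)) := by
  have hlinear {τ : Type} [Fintype τ] (f : τ → Fin n × Fin m) :
      (∑ t, X (f t) : MvPolynomial (Fin n × Fin m) ℂ).IsHomogeneous 1 :=
    IsHomogeneous.sum _ _ 1 fun t _ => isHomogeneous_X ℂ _
  refine Ideal.span_le.mpr ?_
  rintro f (((⟨i, j, j', rfl⟩ | ⟨i, i', j, rfl⟩) | ⟨rows, hrows, rfl⟩) | ⟨cols, hcols, rfl⟩)
  · exact X_mul_X_mem_grIdeal (Or.inl rfl)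
  · exact X_mul_X_mem_grIdeal (Or.inr rfl)
  · refine prod_mem_grIdeal_vanishingIdeal (fun k => hlinear _) fun z hz => ?_
    simpa using exists_rowSum_eq_one hz hrows (by simp; omega)
  · refine prod_mem_grIdeal_vanishingIdeal (fun k => hlinear _) fun z hz => ?_
    simpa using exists_colSum_eq_one hz hcols (by simp; omega)

/-- for `r ≤ min(n,m)`, `I_{n,m,r} ⊆ gr I(UZ_{n,m,r})`. -/
theorem idealInmr_le_grVanishing (n m r : ℕ) (hr : r ≤ min n m) :
    idealInmr n m r ≤ grIdeal (MvPolynomial.vanishingIdeal ℂ (upperRookLocus n m r)) :=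
  idealInmr_le_grVanishing_general n m r
end

section
/- For r ≤ min(n,m): Σ_{d=0}^{min(m,n)} {Σ_{μ⊢d} (s_μ·h_{n−d}) ⊗ (s_μ·h_{m−d})}_{λ_1 ≤ n+m−d−r} = Σ_{r'=r}^{min(m,n)} Σ_{μ⊢r'} (s_μ·h_{n−r'}) ⊗ (s_μ·h_{m−r'}). -/
/-!
A partition `μ` contributes to the coefficient of `s_{λ¹} ⊗ s_{λ²}` exactly when both
`λ¹/μ` and `λ²/μ` are horizontal strips, i.e. when
`max (λ¹ᵢ₊₁, λ²ᵢ₊₁) ≤ μᵢ ≤ min (λ¹ᵢ, λ²ᵢ)` for all `i`. Reflecting `μ` inside this box,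
`μᵢ ↦ max (λ¹ᵢ₊₁, λ²ᵢ₊₁) + min (λ¹ᵢ, λ²ᵢ) - μᵢ`, is an involution taking size `d` to
`|λ¹| + |λ²| - max (λ¹₁, λ²₁) - d`, so these coefficients are symmetric in `d`. The reflection
`d ↦ n + m - max (λ¹₁, λ²₁) - d` turns the truncation condition on the left into `r ≤ d`.
-/

/-- An integer partition, recorded by its (finitely supported, weakly
decreasing) sequence of parts `λ_1 = part 0, λ_2 = part 1, …`. -/
structure Ptn where
  part : ℕ →₀ ℕ
  antitone' : ∀ i, part (i + 1) ≤ part i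

/-- The size `|λ|` of a partition: the sum of its parts. -/
def Ptn.size (l : Ptn) : ℕ := l.part.sum fun _ v => v

/-- `IsPieri μ k λ` holds iff `λ` is obtained from `μ` by adding a horizontal
strip of size `k` (for `k : ℤ`; impossible when `k < 0`), i.e. iff `s_λ` occurs
in the Pieri expansion of `s_μ · h_k`.  By convention `h_k = 0` for `k < 0`. -/
def IsPieri (m : Ptn) (k : ℤ) (l : Ptn) : Prop :=
  (l.size : ℤ) = m.size + k ∧ (∀ i, m.part i ≤ l.part i) ∧
    ∀ i, l.part (i + 1) ≤ m.part i

open Finset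

theorem sum_range_ite_eq_sum_Icc_of_reflect {M : Type*} [AddCommMonoid M] (F : ℕ → M)
    {c T N r : ℕ} (hsymm : ∀ d e, d + e + c = T → F d = F e)
    (hsupp : ∀ d, F d ≠ 0 → d ≤ N ∧ d + c ≤ T) :
    ∑ d ∈ range (N + 1), (if d + r + c ≤ T then F d else 0) = ∑ d ∈ Icc r N, F d := by
  refine sum_bij_ne_zero (fun d _ _ => T - c - d) ?_ ?_ ?_ ?_
  · intro d _ hd
    obtain ⟨hdr, hd⟩ := ite_ne_right_iff.mp hd
    have := hsupp _ (hsymm d (T - c - d) (by omega) ▸ hd)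
    rw [mem_Icc]; omega
  · intro d₁ _ hd₁ d₂ _ hd₂ h
    have := (ite_ne_right_iff.mp hd₁).1
    have := (ite_ne_right_iff.mp hd₂).1
    omega
  · intro e he hFe
    rw [mem_Icc] at he
    have := (hsupp e hFe).2
    have hFe' : F (T - c - e) ≠ 0 := hsymm (T - c - e) e (by omega) ▸ hFe
    refine ⟨T - c - e, ?_, ?_, by omega⟩
    · have := (hsupp _ hFe').1; rw [mem_range]; omega
    · rwa [if_pos (by omega)]
  · intro d _ hd
    have hdr := (ite_ne_right_iff.mp hd).1
    rw [if_pos hdr]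
    exact hsymm d _ (by omega)

namespace Ptn

@[ext]
theorem ext {p q : Ptn} (h : ∀ i, p.part i = q.part i) : p = q := by
  cases p; cases q; congr; exact Finsupp.ext h

theorem exists_part_eq_zero (l : Ptn) : ∃ N, ∀ i, N ≤ i → l.part i = 0 := by
  obtain ⟨N, hN⟩ := exists_nat_subset_range l.part.support
  refine ⟨N, fun i hi => Finsupp.notMem_support_iff.mp fun hmem => ?_⟩
  have := mem_range.mp (hN hmem)
  omega

theorem size_eq_sum_range (l : Ptn) {N : ℕ} (h : ∀ i, N ≤ i → l.part i = 0) :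
    l.size = ∑ i ∈ range N, l.part i := by
  refine Finsupp.sum_of_support_subset _ (fun i hi => ?_) _ fun _ _ => rfl
  by_contra hN
  exact Finsupp.mem_support_iff.mp hi (h i (by simpa using hN))

theorem size_le_size {μ l : Ptn} (h : ∀ i, μ.part i ≤ l.part i) : μ.size ≤ l.size := by
  obtain ⟨N, hN⟩ := l.exists_part_eq_zero
  rw [μ.size_eq_sum_range fun i hi => Nat.eq_zero_of_le_zero (hN i hi ▸ h i),
    l.size_eq_sum_range hN]
  exact sum_le_sum fun i _ => h i

def Interlaces (μ l : Ptn) : Prop :=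
  (∀ i, μ.part i ≤ l.part i) ∧ ∀ i, l.part (i + 1) ≤ μ.part i

theorem isPieri_sub_iff {μ l : Ptn} {n d : ℕ} (hl : l.size = n) (hμ : μ.size = d) :
    IsPieri μ ((n : ℤ) - d) l ↔ μ.Interlaces l := by
  rw [IsPieri, hl, hμ]
  exact and_iff_right (by ring)

theorem size_eq_of_isPieri {μ l : Ptn} {n d : ℕ} (hμ : μ.size = d)
    (h : IsPieri μ ((n : ℤ) - d) l) : l.size = n := by
  have := h.1
  omega

section Reflect

variable {l1 l2 : Ptn}

noncomputable def reflect (μ : Ptn) (h1 : μ.Interlaces l1) (h2 : μ.Interlaces l2) : Ptn where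
  part := Finsupp.onFinset (l1.part.support ∪ l2.part.support)
    (fun i => max (l1.part (i + 1)) (l2.part (i + 1)) + min (l1.part i) (l2.part i) - μ.part i)
    (by
      intro i hi
      by_contra hs
      simp only [mem_union, Finsupp.mem_support_iff, not_or, not_not] at hs
      have := l1.antitone' i
      have := l2.antitone' i
      omega)
  antitone' i := by
    simp only [Finsupp.onFinset_apply]
    have := h1.1 i; have := h2.1 i; have := h1.2 (i + 1); have := h2.2 (i + 1)
    omega

variable {μ : Ptn} {h1 : μ.Interlaces l1} {h2 : μ.Interlaces l2}

@[simp]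
theorem reflect_part (i : ℕ) :
    (reflect μ h1 h2).part i =
      max (l1.part (i + 1)) (l2.part (i + 1)) + min (l1.part i) (l2.part i) - μ.part i :=
  rfl

theorem interlaces_reflect_left : (reflect μ h1 h2).Interlaces l1 :=
  ⟨fun i => by have := h1.2 i; have := h2.2 i; simp only [reflect_part]; omega,
   fun i => by have := h1.1 i; have := h2.1 i; simp only [reflect_part]; omega⟩

theorem interlaces_reflect_right : (reflect μ h1 h2).Interlaces l2 :=
  ⟨fun i => by have := h1.2 i; have := h2.2 i; simp only [reflect_part]; omega,
   fun i => by have := h1.1 i; have := h2.1 i; simp only [reflect_part]; omega⟩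

theorem reflect_reflect :
    reflect (reflect μ h1 h2) interlaces_reflect_left interlaces_reflect_right = μ := by
  ext i
  have := h1.1 i; have := h1.2 i; have := h2.1 i; have := h2.2 i
  simp only [reflect_part]
  omega

theorem size_add_size_reflect :
    μ.size + (reflect μ h1 h2).size + max (l1.part 0) (l2.part 0) = l1.size + l2.size := by
  obtain ⟨N1, hN1⟩ := l1.exists_part_eq_zero
  obtain ⟨N2, hN2⟩ := l2.exists_part_eq_zero
  have hl1 : ∀ i, N1 + N2 ≤ i → l1.part i = 0 := fun i hi => hN1 i (by omega)
  have hl2 : ∀ i, N1 + N2 ≤ i → l2.part i = 0 := fun i hi => hN2 i (by omega)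
  have hμ : ∀ i, N1 + N2 ≤ i → μ.part i = 0 := fun i hi => by
    have := h1.1 i; have := hl1 i hi; omega
  have hρ : ∀ i, N1 + N2 ≤ i → (reflect μ h1 h2).part i = 0 := fun i hi => by
    have := hl1 i hi; have := hl1 (i + 1) (by omega)
    have := hl2 i hi; have := hl2 (i + 1) (by omega)
    simp only [reflect_part]; omega
  rw [μ.size_eq_sum_range hμ, (reflect μ h1 h2).size_eq_sum_range hρ,
    l1.size_eq_sum_range hl1, l2.size_eq_sum_range hl2, ← sum_add_distrib,
    ← sum_add_distrib]
  calc ∑ i ∈ range (N1 + N2), (μ.part i + (reflect μ h1 h2).part i) + max (l1.part 0) (l2.part 0)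
      = ∑ i ∈ range (N1 + N2), max (l1.part (i + 1)) (l2.part (i + 1)) + max (l1.part 0) (l2.part 0)
          + ∑ i ∈ range (N1 + N2), min (l1.part i) (l2.part i) := by
        rw [add_right_comm, ← sum_add_distrib]
        congr 1
        refine sum_congr rfl fun i _ => ?_
        have := h1.1 i; have := h1.2 i; have := h2.1 i; have := h2.2 i
        simp only [reflect_part]
        omega
    _ = ∑ i ∈ range (N1 + N2), (l1.part i + l2.part i) := by
        rw [← sum_range_succ' (fun i => max (l1.part i) (l2.part i)), sum_range_succ,
          hl1 _ le_rfl, hl2 _ le_rfl, max_self, add_zero, ← sum_add_distrib]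
        exact sum_congr rfl fun i _ => max_add_min _ _

noncomputable def reflectEquiv {d e : ℕ}
    (hde : d + e + max (l1.part 0) (l2.part 0) = l1.size + l2.size) :
    {μ : Ptn // μ.size = d ∧ μ.Interlaces l1 ∧ μ.Interlaces l2} ≃
      {μ : Ptn // μ.size = e ∧ μ.Interlaces l1 ∧ μ.Interlaces l2} where
  toFun μ := ⟨reflect μ.1 μ.2.2.1 μ.2.2.2, by
    have := μ.2.1; have := size_add_size_reflect (h1 := μ.2.2.1) (h2 := μ.2.2.2); omega,
    interlaces_reflect_left, interlaces_reflect_right⟩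
  invFun μ := ⟨reflect μ.1 μ.2.2.1 μ.2.2.2, by
    have := μ.2.1; have := size_add_size_reflect (h1 := μ.2.2.1) (h2 := μ.2.2.2); omega,
    interlaces_reflect_left, interlaces_reflect_right⟩
  left_inv μ := Subtype.ext (reflect_reflect (h1 := μ.2.2.1) (h2 := μ.2.2.2))
  right_inv μ := Subtype.ext (reflect_reflect (h1 := μ.2.2.1) (h2 := μ.2.2.2))

end Reflect

end Ptn

open Ptn

/-- The coefficient of `s_{l1} ⊗ s_{l2}` in `Σ_{μ ⊢ d} (s_μ·h_{n−d}) ⊗ (s_μ·h_{m−d})`. -/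
noncomputable def pieriCoeff (n m : ℕ) (l1 l2 : Ptn) (d : ℕ) : ℕ :=
  Nat.card {μ : Ptn // μ.size = d ∧ IsPieri μ ((n : ℤ) - d) l1 ∧ IsPieri μ ((m : ℤ) - d) l2}

section PieriCoeff

variable {n m : ℕ} {l1 l2 : Ptn}

theorem pieriCoeff_eq_zero_of_size (h : ¬(l1.size = n ∧ l2.size = m)) (d : ℕ) :
    pieriCoeff n m l1 l2 d = 0 := by
  rw [pieriCoeff, Nat.card_eq_zero]
  exact Or.inl ⟨fun ⟨_, hμ, hp1, hp2⟩ =>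
    h ⟨size_eq_of_isPieri hμ hp1, size_eq_of_isPieri hμ hp2⟩⟩

theorem pieriCoeff_eq_card_interlaces (h1 : l1.size = n) (h2 : l2.size = m) (d : ℕ) :
    pieriCoeff n m l1 l2 d =
      Nat.card {μ : Ptn // μ.size = d ∧ μ.Interlaces l1 ∧ μ.Interlaces l2} :=
  Nat.card_congr <| Equiv.subtypeEquivRight fun _ =>
    and_congr_right fun hμ => and_congr (isPieri_sub_iff h1 hμ) (isPieri_sub_iff h2 hμ)

theorem pieriCoeff_eq_of_add_eq (h1 : l1.size = n) (h2 : l2.size = m) (d e : ℕ)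
    (hde : d + e + max (l1.part 0) (l2.part 0) = n + m) :
    pieriCoeff n m l1 l2 d = pieriCoeff n m l1 l2 e := by
  rw [pieriCoeff_eq_card_interlaces h1 h2, pieriCoeff_eq_card_interlaces h1 h2]
  exact Nat.card_congr (reflectEquiv (h1 ▸ h2 ▸ hde))

theorem le_of_pieriCoeff_ne_zero {d : ℕ} (h : pieriCoeff n m l1 l2 d ≠ 0) :
    d ≤ min m n ∧ d + max (l1.part 0) (l2.part 0) ≤ n + m := by
  obtain ⟨⟨μ, hμ, hp1, hp2⟩⟩ := (Nat.card_ne_zero.mp h).1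
  have h1 := size_eq_of_isPieri hμ hp1
  have h2 := size_eq_of_isPieri hμ hp2
  rw [isPieri_sub_iff h1 hμ] at hp1
  rw [isPieri_sub_iff h2 hμ] at hp2
  have := size_le_size hp1.1
  have := size_le_size hp2.1
  have := size_add_size_reflect (h1 := hp1) (h2 := hp2)
  omega

end PieriCoeff

theorem schur_sum_eq_general (n m r : ℕ) (l1 l2 : Ptn) :
    (∑ d ∈ Finset.range (min m n + 1),
      if l1.part 0 + d + r ≤ n + m ∧ l2.part 0 + d + r ≤ n + m then
        Nat.card {mu : Ptn // mu.size = d ∧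
          IsPieri mu ((n : ℤ) - d) l1 ∧ IsPieri mu ((m : ℤ) - d) l2}
      else 0) =
    ∑ r' ∈ Finset.Icc r (min m n),
      Nat.card {mu : Ptn // mu.size = r' ∧
        IsPieri mu ((n : ℤ) - r') l1 ∧ IsPieri mu ((m : ℤ) - r') l2} := by
  change ∑ d ∈ range (min m n + 1),
      (if l1.part 0 + d + r ≤ n + m ∧ l2.part 0 + d + r ≤ n + m then pieriCoeff n m l1 l2 d
        else 0) =
    ∑ r' ∈ Icc r (min m n), pieriCoeff n m l1 l2 r'
  by_cases hsz : l1.size = n ∧ l2.size = m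
  · have htrunc : ∀ d, (l1.part 0 + d + r ≤ n + m ∧ l2.part 0 + d + r ≤ n + m) ↔
        d + r + max (l1.part 0) (l2.part 0) ≤ n + m := fun d => by omega
    simp_rw [htrunc]
    exact sum_range_ite_eq_sum_Icc_of_reflect _ (pieriCoeff_eq_of_add_eq hsz.1 hsz.2)
      fun _ hd => le_of_pieriCoeff_ne_zero hd
  · simp [pieriCoeff_eq_zero_of_size hsz]

theorem schur_sum_eq (n m r : ℕ) (hr : r ≤ min n m) (l1 l2 : Ptn) :
    (∑ d ∈ Finset.range (min m n + 1),
      if l1.part 0 + d + r ≤ n + m ∧ l2.part 0 + d + r ≤ n + m then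
        Nat.card {mu : Ptn // mu.size = d ∧
          IsPieri mu ((n : ℤ) - d) l1 ∧ IsPieri mu ((m : ℤ) - d) l2}
      else 0) =
    ∑ r' ∈ Finset.Icc r (min m n),
      Nat.card {mu : Ptn // mu.size = r' ∧
        IsPieri mu ((n : ℤ) - r') l1 ∧ IsPieri mu ((m : ℤ) - r') l2} :=
  schur_sum_eq_general n m r l1 l2
end
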